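/- arXiv:1912.02799 — 9 statements merged into one kernel-verified Lean document; each statement's English description precedes it below -/
import Mathlib

section
/- Let X be a topological space and μ a measure on the Borel σ-algebra of X. Then for any two sets A, B ⊆ X, the frontiers satisfy μ(∂(A ∩ B)) + μ(∂(A ∪ B)) ≤ μ(∂A) + μ(∂B). (This is the area cut-and-paste inequality A[M₁′] + A[M₂′] ≤ A[M₁] + A[M₂] used in the paper's proofs of entanglement wedge nesting and strong subadditivity, where the surfaces M are the boundaries of homology hypersurfaces on a Cauchy slice and μ plays the role of the area functional.) -/
lemma frontier_inter_union_subset {X : Type*} [TopologicalSpace X] (A B : Set X) :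
    frontier (A ∩ B) ∩ frontier (A ∪ B) ⊆ frontier A ∩ frontier B := by
  have key : ∀ (A B : Set X), frontier (A ∩ B) ∩ frontier (A ∪ B) ⊆ frontier A := by
    intro A B x ⟨h1, h2⟩
    by_contra hA
    rw [frontier, Set.mem_diff, not_and_or, not_not] at hA
    rcases hA with h | h
    · exact h (closure_mono (Set.inter_subset_left) h1.1)
    · exact h2.2 (interior_mono Set.subset_union_left h)
  intro x hx
  refine ⟨key A B hx, key B A ?_⟩
  rwa [Set.inter_comm A B, Set.union_comm A B] at hx

/-- Area cut-and-paste inequality: for any measure on the Borel σ-algebra of a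
topological space, the measures of the frontiers of the intersection and the
union of two sets are together bounded by the measures of the frontiers of the
original sets. -/
theorem frontier_measure_inter_union_le
    {X : Type*} [TopologicalSpace X] [MeasurableSpace X] [BorelSpace X]
    (μ : MeasureTheory.Measure X) (A B : Set X) :
    μ (frontier (A ∩ B)) + μ (frontier (A ∪ B)) ≤ μ (frontier A) + μ (frontier B) := by
  have hm : MeasurableSet (frontier (A ∪ B)) := isClosed_frontier.measurableSet
  have hm' : MeasurableSet (frontier B) := isClosed_frontier.measurableSet
  calc μ (frontier (A ∩ B)) + μ (frontier (A ∪ B))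
      = μ (frontier (A ∩ B) ∪ frontier (A ∪ B)) + μ (frontier (A ∩ B) ∩ frontier (A ∪ B)) :=
        (MeasureTheory.measure_union_add_inter _ hm).symm
    _ ≤ μ (frontier A ∪ frontier B) + μ (frontier A ∩ frontier B) := by
        have h1 : frontier (A ∩ B) ∪ frontier (A ∪ B) ⊆ frontier A ∪ frontier B := by
          apply Set.union_subset
          · exact (frontier_inter_subset A B).trans
              (Set.union_subset_union Set.inter_subset_left Set.inter_subset_right)
          · exact (frontier_union_subset A B).trans
              (Set.union_subset_union Set.inter_subset_left Set.inter_subset_right)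
        exact add_le_add (MeasureTheory.measure_mono h1)
          (MeasureTheory.measure_mono (frontier_inter_union_subset A B))
    _ = μ (frontier A) + μ (frontier B) := MeasureTheory.measure_union_add_inter _ hm'
end

section
/- Let X be a topological space and μ a measure on the Borel σ-algebra of X. Let A, B, C ⊆ X be sets whose frontiers have μ-null triple intersection, μ(∂A ∩ ∂B ∩ ∂C) = 0. Then μ(∂((A ∩ B) \ C)) + μ(∂((A ∩ C) \ B)) + μ(∂((B ∩ C) \ A)) + μ(∂(A ∪ B ∪ C)) ≤ μ(∂A) + μ(∂B) + μ(∂C). (This is the claim that the classical gravitational-entropy terms satisfy the monogamy-of-mutual-information cut-and-paste inequality: the homology hypersurfaces H₁′ = (A∩B)\C, H₂′ = (A∩C)\B, H₃′ = (B∩C)\A and H₁₂₃′ = A∪B∪C constructed from the three representative homology hypersurfaces A = H̃₁₂, B = H̃₁₃, C = H̃₂₃ have total boundary area no larger than the total boundary area of the original three.) -/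
open Set MeasureTheory

private lemma union7_le {X : Type*} [MeasurableSpace X] (μ : Measure X) (a b c d e f g : Set X) :
    μ (a ∪ b ∪ c ∪ d ∪ e ∪ f ∪ g) ≤ μ a + μ b + μ c + μ d + μ e + μ f + μ g :=
  le_trans (measure_union_le _ _) (add_le_add (le_trans (measure_union_le _ _)
    (add_le_add (le_trans (measure_union_le _ _) (add_le_add (le_trans (measure_union_le _ _)
      (add_le_add (le_trans (measure_union_le _ _) (add_le_add (measure_union_le _ _) le_rfl))
        le_rfl)) le_rfl)) le_rfl)) le_rfl)

private lemma pair_le {X : Type*} [MeasurableSpace X] (μ : Measure X) {s t r : Set X}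
    (ht : MeasurableSet (t ∩ r)) (hd : Disjoint (s ∩ r) (t ∩ r)) :
    μ (s ∩ r) + μ (t ∩ r) ≤ μ r := by
  rw [← measure_union hd ht]
  exact measure_mono (union_subset inter_subset_right inter_subset_right)

private lemma quad_le {X : Type*} [MeasurableSpace X] (μ : Measure X) {a b c d r : Set X}
    (mb : MeasurableSet (b ∩ r)) (mc : MeasurableSet (c ∩ r)) (md : MeasurableSet (d ∩ r))
    (dab : Disjoint (a ∩ r) (b ∩ r)) (dac : Disjoint (a ∩ r) (c ∩ r))
    (dad : Disjoint (a ∩ r) (d ∩ r)) (dbc : Disjoint (b ∩ r) (c ∩ r))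
    (dbd : Disjoint (b ∩ r) (d ∩ r)) (dcd : Disjoint (c ∩ r) (d ∩ r)) :
    μ (a ∩ r) + μ (b ∩ r) + μ (c ∩ r) + μ (d ∩ r) ≤ μ r := by
  rw [← measure_union dab mb, ← measure_union (dac.union_left dbc) mc,
    ← measure_union ((dad.union_left dbd).union_left dcd) md]
  refine measure_mono ?_
  rintro x (((⟨-, h⟩ | ⟨-, h⟩) | ⟨-, h⟩) | ⟨-, h⟩) <;> exact h

set_option maxHeartbeats 1000000 in
/-- MMI cut-and-paste inequality for the classical gravitational entropy terms:
if the frontiers of A, B, C have μ-null triple intersection, then the total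
boundary measure of the regions (A∩B)\C, (A∩C)\B, (B∩C)\A and A∪B∪C is at most
the total boundary measure of A, B, C. -/
theorem frontier_measure_mmi
    {X : Type*} [TopologicalSpace X] [MeasurableSpace X] [BorelSpace X]
    (μ : MeasureTheory.Measure X) (A B C : Set X)
    (hnull : μ (frontier A ∩ frontier B ∩ frontier C) = 0) :
    μ (frontier ((A ∩ B) \ C)) + μ (frontier ((A ∩ C) \ B)) +
      μ (frontier ((B ∩ C) \ A)) + μ (frontier (A ∪ B ∪ C)) ≤
    μ (frontier A) + μ (frontier B) + μ (frontier C) := by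
  classical
  set F1 := frontier A with hF1def
  set F2 := frontier B with hF2def
  set F3 := frontier C with hF3def
  set S1 := frontier ((A ∩ B) \ C) with hS1def
  set S2 := frontier ((A ∩ C) \ B) with hS2def
  set S3 := frontier ((B ∩ C) \ A) with hS3def
  set S4 := frontier (A ∪ B ∪ C) with hS4def
  -- closure / interior facts
  have cl1A : S1 ⊆ closure A := by
    rw [hS1def]; exact frontier_subset_closure.trans (closure_mono fun x hx => hx.1.1)
  have cl1B : S1 ⊆ closure B := by
    rw [hS1def]; exact frontier_subset_closure.trans (closure_mono fun x hx => hx.1.2)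
  have cl2A : S2 ⊆ closure A := by
    rw [hS2def]; exact frontier_subset_closure.trans (closure_mono fun x hx => hx.1.1)
  have cl2C : S2 ⊆ closure C := by
    rw [hS2def]; exact frontier_subset_closure.trans (closure_mono fun x hx => hx.1.2)
  have cl3B : S3 ⊆ closure B := by
    rw [hS3def]; exact frontier_subset_closure.trans (closure_mono fun x hx => hx.1.1)
  have cl3C : S3 ⊆ closure C := by
    rw [hS3def]; exact frontier_subset_closure.trans (closure_mono fun x hx => hx.1.2)
  have ni1C : ∀ x ∈ S1, x ∉ interior C := by
    intro x hx hxC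
    rw [hS1def] at hx
    have h : x ∈ closure Cᶜ :=
      closure_mono (fun y hy => hy.2) (frontier_subset_closure hx)
    rw [closure_compl] at h; exact h hxC
  have ni2B : ∀ x ∈ S2, x ∉ interior B := by
    intro x hx hxB
    rw [hS2def] at hx
    have h : x ∈ closure Bᶜ :=
      closure_mono (fun y hy => hy.2) (frontier_subset_closure hx)
    rw [closure_compl] at h; exact h hxB
  have ni3A : ∀ x ∈ S3, x ∉ interior A := by
    intro x hx hxA
    rw [hS3def] at hx
    have h : x ∈ closure Aᶜ :=
      closure_mono (fun y hy => hy.2) (frontier_subset_closure hx)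
    rw [closure_compl] at h; exact h hxA
  have ni4 : ∀ x ∈ S4, x ∉ interior A ∧ x ∉ interior B ∧ x ∉ interior C := by
    intro x hx
    rw [hS4def, ← frontier_compl] at hx
    have h : x ∈ closure (A ∪ B ∪ C)ᶜ := frontier_subset_closure hx
    refine ⟨?_, ?_, ?_⟩
    · intro hxA
      have := closure_mono (compl_subset_compl.mpr
        (subset_union_left.trans subset_union_left : A ⊆ A ∪ B ∪ C)) h
      rw [closure_compl] at this; exact this hxA
    · intro hxB
      have := closure_mono (compl_subset_compl.mpr
        (subset_union_right.trans subset_union_left : B ⊆ A ∪ B ∪ C)) h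
      rw [closure_compl] at this; exact this hxB
    · intro hxC
      have := closure_mono (compl_subset_compl.mpr
        (subset_union_right : C ⊆ A ∪ B ∪ C)) h
      rw [closure_compl] at this; exact this hxC
  -- group facts: membership in a pair of the S's determines the side of a frontier
  have mem_frontier_of : ∀ {D : Set X} {x : X}, x ∈ closure D → x ∉ interior D → x ∈ frontier D :=
    fun h1 h2 => ⟨h1, h2⟩
  have hA1 : ∀ {x}, x ∉ F1 → x ∈ S1 ∪ S2 → x ∈ interior A := by
    intro x hx h
    by_contra h'
    exact hx (mem_frontier_of (h.elim (fun h => cl1A h) (fun h => cl2A h)) h')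
  have hA2 : ∀ {x : X}, x ∈ S3 ∪ S4 → x ∉ interior A :=
    fun {x} h => h.elim (ni3A x) (fun h => (ni4 x h).1)
  have hB1 : ∀ {x}, x ∉ F2 → x ∈ S1 ∪ S3 → x ∈ interior B := by
    intro x hx h
    by_contra h'
    exact hx (mem_frontier_of (h.elim (fun h => cl1B h) (fun h => cl3B h)) h')
  have hB2 : ∀ {x : X}, x ∈ S2 ∪ S4 → x ∉ interior B :=
    fun {x} h => h.elim (ni2B x) (fun h => (ni4 x h).2.1)
  have hC1 : ∀ {x}, x ∉ F3 → x ∈ S2 ∪ S3 → x ∈ interior C := by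
    intro x hx h
    by_contra h'
    exact hx (mem_frontier_of (h.elim (fun h => cl2C h) (fun h => cl3C h)) h')
  have hC2 : ∀ {x : X}, x ∈ S1 ∪ S4 → x ∉ interior C :=
    fun {x} h => h.elim (fun h => ni1C x h) (fun h => (ni4 x h).2.2)
  -- disjointness machines
  have djA : ∀ {r s t : Set X}, (∀ x ∈ r, x ∉ F1) → s ⊆ S1 ∪ S2 → t ⊆ S3 ∪ S4 →
      Disjoint (s ∩ r) (t ∩ r) := by
    intro r s t hr hs ht
    rw [Set.disjoint_left]
    rintro x ⟨hxs, hxr⟩ ⟨hxt, -⟩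
    exact hA2 (ht hxt) (hA1 (hr x hxr) (hs hxs))
  have djB : ∀ {r s t : Set X}, (∀ x ∈ r, x ∉ F2) → s ⊆ S1 ∪ S3 → t ⊆ S2 ∪ S4 →
      Disjoint (s ∩ r) (t ∩ r) := by
    intro r s t hr hs ht
    rw [Set.disjoint_left]
    rintro x ⟨hxs, hxr⟩ ⟨hxt, -⟩
    exact hB2 (ht hxt) (hB1 (hr x hxr) (hs hxs))
  have djC : ∀ {r s t : Set X}, (∀ x ∈ r, x ∉ F3) → s ⊆ S1 ∪ S4 → t ⊆ S2 ∪ S3 →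
      Disjoint (s ∩ r) (t ∩ r) := by
    intro r s t hr hs ht
    rw [Set.disjoint_left]
    rintro x ⟨hxs, hxr⟩ ⟨hxt, -⟩
    exact hC2 (hs hxs) (hC1 (hr x hxr) (ht hxt))
  -- regions
  set RA := F1 \ (F2 ∪ F3) with hRAdef
  set RB := F2 \ (F1 ∪ F3) with hRBdef
  set RC := F3 \ (F1 ∪ F2) with hRCdef
  set RAB := (F1 ∩ F2) \ F3 with hRABdef
  set RAC := (F1 ∩ F3) \ F2 with hRACdef
  set RBC := (F2 ∩ F3) \ F1 with hRBCdef
  set T := F1 ∩ F2 ∩ F3 with hTdef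
  have hT0 : μ T = 0 := by simpa [hTdef] using hnull
  -- region side facts
  have hRAnF2 : ∀ x ∈ RA, x ∉ F2 := fun x hx h => hx.2 (Or.inl h)
  have hRAnF3 : ∀ x ∈ RA, x ∉ F3 := fun x hx h => hx.2 (Or.inr h)
  have hRBnF1 : ∀ x ∈ RB, x ∉ F1 := fun x hx h => hx.2 (Or.inl h)
  have hRBnF3 : ∀ x ∈ RB, x ∉ F3 := fun x hx h => hx.2 (Or.inr h)
  have hRCnF1 : ∀ x ∈ RC, x ∉ F1 := fun x hx h => hx.2 (Or.inl h)
  have hRCnF2 : ∀ x ∈ RC, x ∉ F2 := fun x hx h => hx.2 (Or.inr h)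
  have hRABnF3 : ∀ x ∈ RAB, x ∉ F3 := fun x hx => hx.2
  have hRACnF2 : ∀ x ∈ RAC, x ∉ F2 := fun x hx => hx.2
  have hRBCnF1 : ∀ x ∈ RBC, x ∉ F1 := fun x hx => hx.2
  -- measurability
  have mF1 : MeasurableSet F1 := isClosed_frontier.measurableSet
  have mF2 : MeasurableSet F2 := isClosed_frontier.measurableSet
  have mF3 : MeasurableSet F3 := isClosed_frontier.measurableSet
  have mS1 : MeasurableSet S1 := isClosed_frontier.measurableSet
  have mS2 : MeasurableSet S2 := isClosed_frontier.measurableSet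
  have mS3 : MeasurableSet S3 := isClosed_frontier.measurableSet
  have mS4 : MeasurableSet S4 := isClosed_frontier.measurableSet
  have mRA : MeasurableSet RA := mF1.diff (mF2.union mF3)
  have mRB : MeasurableSet RB := mF2.diff (mF1.union mF3)
  have mRC : MeasurableSet RC := mF3.diff (mF1.union mF2)
  have mRAB : MeasurableSet RAB := (mF1.inter mF2).diff mF3
  have mRAC : MeasurableSet RAC := (mF1.inter mF3).diff mF2
  have mRBC : MeasurableSet RBC := (mF2.inter mF3).diff mF1
  -- coverage
  have fiu : ∀ s t : Set X, frontier (s ∩ t) ⊆ frontier s ∪ frontier t := fun s t =>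
    (frontier_inter_subset s t).trans
      (union_subset_union inter_subset_left inter_subset_right)
  have fuu : ∀ s t : Set X, frontier (s ∪ t) ⊆ frontier s ∪ frontier t := fun s t => by
    have h := fiu sᶜ tᶜ
    rw [← compl_union, frontier_compl, frontier_compl, frontier_compl] at h
    exact h
  have hU1 : S1 ⊆ F1 ∪ F2 ∪ F3 := by
    rw [hS1def, diff_eq]
    refine (fiu _ _).trans ?_
    rw [frontier_compl]
    exact union_subset_union (fiu A B) (subset_refl _)
  have hU2 : S2 ⊆ F1 ∪ F3 ∪ F2 := by
    rw [hS2def, diff_eq]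
    refine (fiu _ _).trans ?_
    rw [frontier_compl]
    exact union_subset_union (fiu A C) (subset_refl _)
  have hU2' : S2 ⊆ F1 ∪ F2 ∪ F3 := hU2.trans (by intro x; simp [mem_union]; tauto)
  have hU3 : S3 ⊆ F2 ∪ F3 ∪ F1 := by
    rw [hS3def, diff_eq]
    refine (fiu _ _).trans ?_
    rw [frontier_compl]
    exact union_subset_union (fiu B C) (subset_refl _)
  have hU3' : S3 ⊆ F1 ∪ F2 ∪ F3 := hU3.trans (by intro x; simp [mem_union]; tauto)
  have hU4 : S4 ⊆ F1 ∪ F2 ∪ F3 := by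
    rw [hS4def]
    exact (fuu _ _).trans (union_subset_union (fuu A B) (subset_refl _))
  have hcover : F1 ∪ F2 ∪ F3 ⊆ RA ∪ RB ∪ RC ∪ RAB ∪ RAC ∪ RBC ∪ T := by
    intro x hx
    have hnotu : ∀ {u v : Set X}, x ∉ u → x ∉ v → x ∉ u ∪ v := by
      intro u v hu hv h
      rcases h with h | h
      exacts [hu h, hv h]
    by_cases h1 : x ∈ F1 <;> by_cases h2 : x ∈ F2 <;> by_cases h3 : x ∈ F3
    · exact Or.inr ⟨⟨h1, h2⟩, h3⟩
    · exact Or.inl (Or.inl (Or.inl (Or.inr ⟨⟨h1, h2⟩, h3⟩)))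
    · exact Or.inl (Or.inl (Or.inr ⟨⟨h1, h3⟩, h2⟩))
    · exact Or.inl (Or.inl (Or.inl (Or.inl (Or.inl (Or.inl ⟨h1, hnotu h2 h3⟩)))))
    · exact Or.inl (Or.inr ⟨⟨h2, h3⟩, h1⟩)
    · exact Or.inl (Or.inl (Or.inl (Or.inl (Or.inl (Or.inr ⟨h2, hnotu h1 h3⟩)))))
    · exact Or.inl (Or.inl (Or.inl (Or.inl (Or.inr ⟨h3, hnotu h1 h2⟩))))
    · rcases hx with (h | h) | h
      exacts [absurd h h1, absurd h h2, absurd h h3]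
  have expand : ∀ {s : Set X}, s ⊆ F1 ∪ F2 ∪ F3 →
      μ s ≤ μ (s ∩ RA) + μ (s ∩ RB) + μ (s ∩ RC) + μ (s ∩ RAB) + μ (s ∩ RAC) +
        μ (s ∩ RBC) + μ (s ∩ T) := by
    intro s hs
    calc μ s ≤ μ (s ∩ (RA ∪ RB ∪ RC ∪ RAB ∪ RAC ∪ RBC ∪ T)) :=
          measure_mono fun x hx => ⟨hx, hcover (hs hx)⟩
      _ = μ ((s ∩ RA) ∪ (s ∩ RB) ∪ (s ∩ RC) ∪ (s ∩ RAB) ∪ (s ∩ RAC) ∪ (s ∩ RBC) ∪ (s ∩ T)) := by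
          rw [inter_union_distrib_left, inter_union_distrib_left, inter_union_distrib_left,
            inter_union_distrib_left, inter_union_distrib_left, inter_union_distrib_left]
      _ ≤ _ := union7_le μ _ _ _ _ _ _ _
  -- region bounds
  have bRA : μ (S1 ∩ RA) + μ (S2 ∩ RA) + μ (S3 ∩ RA) + μ (S4 ∩ RA) ≤ μ RA :=
    quad_le μ (mS2.inter mRA) (mS3.inter mRA) (mS4.inter mRA)
      (djC hRAnF3 subset_union_left subset_union_left)
      (djC hRAnF3 subset_union_left subset_union_right)
      (djB hRAnF2 subset_union_left subset_union_right)
      ((djB hRAnF2 subset_union_right subset_union_left).symm)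
      ((djC hRAnF3 subset_union_right subset_union_left).symm)
      ((djC hRAnF3 subset_union_right subset_union_right).symm)
  have bRB : μ (S1 ∩ RB) + μ (S2 ∩ RB) + μ (S3 ∩ RB) + μ (S4 ∩ RB) ≤ μ RB :=
    quad_le μ (mS2.inter mRB) (mS3.inter mRB) (mS4.inter mRB)
      (djC hRBnF3 subset_union_left subset_union_left)
      (djA hRBnF1 subset_union_left subset_union_left)
      (djA hRBnF1 subset_union_left subset_union_right)
      (djA hRBnF1 subset_union_right subset_union_left)
      (djA hRBnF1 subset_union_right subset_union_right)
      ((djC hRBnF3 subset_union_right subset_union_right).symm)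
  have bRC : μ (S1 ∩ RC) + μ (S2 ∩ RC) + μ (S3 ∩ RC) + μ (S4 ∩ RC) ≤ μ RC :=
    quad_le μ (mS2.inter mRC) (mS3.inter mRC) (mS4.inter mRC)
      (djB hRCnF2 subset_union_left subset_union_left)
      (djA hRCnF1 subset_union_left subset_union_left)
      (djA hRCnF1 subset_union_left subset_union_right)
      (djA hRCnF1 subset_union_right subset_union_left)
      (djA hRCnF1 subset_union_right subset_union_right)
      (djB hRCnF2 subset_union_right subset_union_right)
  have bRAB : μ (S1 ∩ RAB) + μ (S2 ∩ RAB) + μ (S3 ∩ RAB) + μ (S4 ∩ RAB) ≤ μ RAB + μ RAB := by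
    have h12 := pair_le μ (mS2.inter mRAB) (djC hRABnF3 subset_union_left subset_union_left)
    have h34 := pair_le μ (mS4.inter mRAB)
      ((djC hRABnF3 subset_union_right subset_union_right).symm)
    calc μ (S1 ∩ RAB) + μ (S2 ∩ RAB) + μ (S3 ∩ RAB) + μ (S4 ∩ RAB)
        = (μ (S1 ∩ RAB) + μ (S2 ∩ RAB)) + (μ (S3 ∩ RAB) + μ (S4 ∩ RAB)) := by ring
      _ ≤ μ RAB + μ RAB := add_le_add h12 h34
  have bRAC : μ (S1 ∩ RAC) + μ (S2 ∩ RAC) + μ (S3 ∩ RAC) + μ (S4 ∩ RAC) ≤ μ RAC + μ RAC := by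
    have h12 := pair_le μ (mS2.inter mRAC) (djB hRACnF2 subset_union_left subset_union_left)
    have h34 := pair_le μ (mS4.inter mRAC) (djB hRACnF2 subset_union_right subset_union_right)
    calc μ (S1 ∩ RAC) + μ (S2 ∩ RAC) + μ (S3 ∩ RAC) + μ (S4 ∩ RAC)
        = (μ (S1 ∩ RAC) + μ (S2 ∩ RAC)) + (μ (S3 ∩ RAC) + μ (S4 ∩ RAC)) := by ring
      _ ≤ μ RAC + μ RAC := add_le_add h12 h34
  have bRBC : μ (S1 ∩ RBC) + μ (S2 ∩ RBC) + μ (S3 ∩ RBC) + μ (S4 ∩ RBC) ≤ μ RBC + μ RBC := by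
    have h13 := pair_le μ (mS3.inter mRBC) (djA hRBCnF1 subset_union_left subset_union_left)
    have h24 := pair_le μ (mS4.inter mRBC) (djA hRBCnF1 subset_union_right subset_union_right)
    calc μ (S1 ∩ RBC) + μ (S2 ∩ RBC) + μ (S3 ∩ RBC) + μ (S4 ∩ RBC)
        = (μ (S1 ∩ RBC) + μ (S3 ∩ RBC)) + (μ (S2 ∩ RBC) + μ (S4 ∩ RBC)) := by ring
      _ ≤ μ RBC + μ RBC := add_le_add h13 h24
  have zT : ∀ s : Set X, μ (s ∩ T) = 0 := fun s => measure_mono_null inter_subset_right hT0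
  have bT : μ (S1 ∩ T) + μ (S2 ∩ T) + μ (S3 ∩ T) + μ (S4 ∩ T) = 0 := by
    simp [zT]
  -- right-hand side bounds
  have hF1b : μ RA + μ RAB + μ RAC ≤ μ F1 := by
    have d1 : Disjoint RA RAB := Set.disjoint_left.mpr fun x hx hy => hx.2 (Or.inl hy.1.2)
    have d2 : Disjoint (RA ∪ RAB) RAC := by
      rw [disjoint_union_left]
      exact ⟨Set.disjoint_left.mpr fun x hx hy => hx.2 (Or.inr hy.1.2),
        Set.disjoint_left.mpr fun x hx hy => hx.2 hy.1.2⟩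
    rw [← measure_union d1 mRAB, ← measure_union d2 mRAC]
    refine measure_mono ?_
    rintro x ((h | h) | h)
    exacts [h.1, h.1.1, h.1.1]
  have hF2b : μ RB + μ RAB + μ RBC ≤ μ F2 := by
    have d1 : Disjoint RB RAB := Set.disjoint_left.mpr fun x hx hy => hx.2 (Or.inl hy.1.1)
    have d2 : Disjoint (RB ∪ RAB) RBC := by
      rw [disjoint_union_left]
      exact ⟨Set.disjoint_left.mpr fun x hx hy => hx.2 (Or.inr hy.1.2),
        Set.disjoint_left.mpr fun x hx hy => hx.2 hy.1.2⟩
    rw [← measure_union d1 mRAB, ← measure_union d2 mRBC]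
    refine measure_mono ?_
    rintro x ((h | h) | h)
    exacts [h.1, h.1.2, h.1.1]
  have hF3b : μ RC + μ RAC + μ RBC ≤ μ F3 := by
    have d1 : Disjoint RC RAC := Set.disjoint_left.mpr fun x hx hy => hx.2 (Or.inl hy.1.1)
    have d2 : Disjoint (RC ∪ RAC) RBC := by
      rw [disjoint_union_left]
      exact ⟨Set.disjoint_left.mpr fun x hx hy => hx.2 (Or.inr hy.1.1),
        Set.disjoint_left.mpr fun x hx hy => hx.2 hy.1.1⟩
    rw [← measure_union d1 mRAC, ← measure_union d2 mRBC]
    refine measure_mono ?_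
    rintro x ((h | h) | h)
    exacts [h.1, h.1.2, h.1.2]
  -- put it all together
  calc μ S1 + μ S2 + μ S3 + μ S4
      ≤ (μ (S1 ∩ RA) + μ (S1 ∩ RB) + μ (S1 ∩ RC) + μ (S1 ∩ RAB) + μ (S1 ∩ RAC) +
          μ (S1 ∩ RBC) + μ (S1 ∩ T)) +
        (μ (S2 ∩ RA) + μ (S2 ∩ RB) + μ (S2 ∩ RC) + μ (S2 ∩ RAB) + μ (S2 ∩ RAC) +
          μ (S2 ∩ RBC) + μ (S2 ∩ T)) +
        (μ (S3 ∩ RA) + μ (S3 ∩ RB) + μ (S3 ∩ RC) + μ (S3 ∩ RAB) + μ (S3 ∩ RAC) +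
          μ (S3 ∩ RBC) + μ (S3 ∩ T)) +
        (μ (S4 ∩ RA) + μ (S4 ∩ RB) + μ (S4 ∩ RC) + μ (S4 ∩ RAB) + μ (S4 ∩ RAC) +
          μ (S4 ∩ RBC) + μ (S4 ∩ T)) :=
        add_le_add (add_le_add (add_le_add (expand hU1) (expand hU2')) (expand hU3'))
          (expand hU4)
    _ = (μ (S1 ∩ RA) + μ (S2 ∩ RA) + μ (S3 ∩ RA) + μ (S4 ∩ RA)) +
        (μ (S1 ∩ RB) + μ (S2 ∩ RB) + μ (S3 ∩ RB) + μ (S4 ∩ RB)) +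
        (μ (S1 ∩ RC) + μ (S2 ∩ RC) + μ (S3 ∩ RC) + μ (S4 ∩ RC)) +
        (μ (S1 ∩ RAB) + μ (S2 ∩ RAB) + μ (S3 ∩ RAB) + μ (S4 ∩ RAB)) +
        (μ (S1 ∩ RAC) + μ (S2 ∩ RAC) + μ (S3 ∩ RAC) + μ (S4 ∩ RAC)) +
        (μ (S1 ∩ RBC) + μ (S2 ∩ RBC) + μ (S3 ∩ RBC) + μ (S4 ∩ RBC)) +
        (μ (S1 ∩ T) + μ (S2 ∩ T) + μ (S3 ∩ T) + μ (S4 ∩ T)) := by ring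
    _ ≤ μ RA + μ RB + μ RC + (μ RAB + μ RAB) + (μ RAC + μ RAC) + (μ RBC + μ RBC) + 0 :=
        add_le_add (add_le_add (add_le_add (add_le_add (add_le_add (add_le_add bRA bRB) bRC)
          bRAB) bRAC) bRBC) (le_of_eq bT)
    _ = (μ RA + μ RAB + μ RAC) + (μ RB + μ RAB + μ RBC) + (μ RC + μ RAC + μ RBC) := by ring
    _ ≤ μ F1 + μ F2 + μ F3 := add_le_add (add_le_add hF1b hF2b) hF3b
end

section
/- Suppose f is submodular and let R₁, R₂ ⊆ B be such that minimizers exist for each of R₁, R₂, R₁ ∪ R₂ and R₁ ∩ R₂. Then the constrained minimum is itself submodular: S(R₁ ∪ R₂) + S(R₁ ∩ R₂) ≤ S(R₁) + S(R₂). (This is the mechanism by which bulk strong subadditivity together with minimality of the quantum maximin surfaces on a common Cauchy slice descends to an entropy inequality for boundary regions.) -/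
/-- `H` is a homology hypersurface for the boundary region `R` on the slice,
with boundary set `B`. -/
def InFiber {α : Type*} (B R H : Set α) : Prop := H ∩ B = R

/-- `H` is a minimal-`f` homology hypersurface for `R`. -/
def IsMinimizer {α : Type*} (B : Set α) (f : Set α → ℝ) (R H : Set α) : Prop :=
  InFiber B R H ∧ ∀ H' : Set α, InFiber B R H' → f H ≤ f H'

/-- Submodularity of the constrained minimum: if the generalized entropy `f` on
the slice is submodular, then the minimal values over the fibers of boundary
regions satisfy S(R₁ ∪ R₂) + S(R₁ ∩ R₂) ≤ S(R₁) + S(R₂). -/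
theorem min_submodular {α : Type*} (B : Set α) (f : Set α → ℝ)
    (hf : ∀ H₁ H₂ : Set α, f (H₁ ∪ H₂) + f (H₁ ∩ H₂) ≤ f H₁ + f H₂)
    (R₁ R₂ : Set α) (hR₁ : R₁ ⊆ B) (hR₂ : R₂ ⊆ B)
    (H₁ H₂ Hu Hi : Set α)
    (hH₁ : IsMinimizer B f R₁ H₁) (hH₂ : IsMinimizer B f R₂ H₂)
    (hHu : IsMinimizer B f (R₁ ∪ R₂) Hu) (hHi : IsMinimizer B f (R₁ ∩ R₂) Hi) :
    f Hu + f Hi ≤ f H₁ + f H₂ := by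
  have hu : InFiber B (R₁ ∪ R₂) (H₁ ∪ H₂) := by
    simp only [InFiber, Set.union_inter_distrib_right]
    rw [show H₁ ∩ B = R₁ from hH₁.1, show H₂ ∩ B = R₂ from hH₂.1]
  have hi : InFiber B (R₁ ∩ R₂) (H₁ ∩ H₂) := by
    have : H₁ ∩ H₂ ∩ B = (H₁ ∩ B) ∩ (H₂ ∩ B) := by
      ext x; simp [Set.mem_inter_iff]; tauto
    simp only [InFiber]
    rw [this, show H₁ ∩ B = R₁ from hH₁.1, show H₂ ∩ B = R₂ from hH₂.1]
  calc f Hu + f Hi ≤ f (H₁ ∪ H₂) + f (H₁ ∩ H₂) :=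
        add_le_add (hHu.2 _ hu) (hHi.2 _ hi)
    _ ≤ f H₁ + f H₂ := hf H₁ H₂
end

section
/- (Strong subadditivity from bulk strong subadditivity and minimality on a slice.) Suppose f is submodular and let R₁, R₂, R₃ ⊆ B be pairwise disjoint sets such that minimizers exist for each of R₁ ∪ R₂, R₂ ∪ R₃, R₁ ∪ R₂ ∪ R₃ and R₂. Then S(R₁ ∪ R₂) + S(R₂ ∪ R₃) ≥ S(R₁ ∪ R₂ ∪ R₃) + S(R₂). (This is the combinatorial core of the paper's theorem that the quantum maximin / quantum extremal surface prescription obeys strong subadditivity of boundary entropy: the union and intersection of the homology hypersurfaces of R₁∪R₂ and R₂∪R₃ are admissible homology hypersurfaces for R₁∪R₂∪R₃ and R₂ respectively, and submodularity of the generalized entropy on the slice — bulk strong subadditivity plus the area cut-and-paste — yields the inequality.) -/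
/-- Strong subadditivity from bulk strong subadditivity and minimality on a
slice: for pairwise disjoint boundary regions R₁, R₂, R₃ with submodular f,
S(R₁ ∪ R₂) + S(R₂ ∪ R₃) ≥ S(R₁ ∪ R₂ ∪ R₃) + S(R₂). -/
theorem min_ssa {α : Type*} (B : Set α) (f : Set α → ℝ)
    (hf : ∀ H₁ H₂ : Set α, f (H₁ ∪ H₂) + f (H₁ ∩ H₂) ≤ f H₁ + f H₂)
    (R₁ R₂ R₃ : Set α) (hR₁ : R₁ ⊆ B) (hR₂ : R₂ ⊆ B) (hR₃ : R₃ ⊆ B)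
    (h₁₂ : Disjoint R₁ R₂) (h₁₃ : Disjoint R₁ R₃) (h₂₃ : Disjoint R₂ R₃)
    (H₁₂ H₂₃ H₁₂₃ H₂ : Set α)
    (hH₁₂ : IsMinimizer B f (R₁ ∪ R₂) H₁₂)
    (hH₂₃ : IsMinimizer B f (R₂ ∪ R₃) H₂₃)
    (hH₁₂₃ : IsMinimizer B f (R₁ ∪ R₂ ∪ R₃) H₁₂₃)
    (hH₂ : IsMinimizer B f R₂ H₂) :
    f H₁₂ + f H₂₃ ≥ f H₁₂₃ + f H₂ := by
  obtain ⟨fib₁₂, min₁₂⟩ := hH₁₂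
  obtain ⟨fib₂₃, min₂₃⟩ := hH₂₃
  obtain ⟨fib₁₂₃, min₁₂₃⟩ := hH₁₂₃
  obtain ⟨fib₂, min₂⟩ := hH₂
  have hu : InFiber B (R₁ ∪ R₂ ∪ R₃) (H₁₂ ∪ H₂₃) := by
    unfold InFiber at *
    rw [Set.union_inter_distrib_right, fib₁₂, fib₂₃]
    ext x; simp only [Set.mem_union]; tauto
  have hi : InFiber B R₂ (H₁₂ ∩ H₂₃) := by
    unfold InFiber at *
    have : H₁₂ ∩ H₂₃ ∩ B = (H₁₂ ∩ B) ∩ (H₂₃ ∩ B) := by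
      ext x; simp; tauto
    rw [this, fib₁₂, fib₂₃]
    ext x
    simp only [Set.mem_inter_iff, Set.mem_union]
    constructor
    · rintro ⟨h1 | h2, h2' | h3⟩
      · exact (Set.disjoint_left.mp h₁₂ h1 h2').elim
      · exact (Set.disjoint_left.mp h₁₃ h1 h3).elim
      · exact h2
      · exact h2
    · intro h; exact ⟨Or.inr h, Or.inl h⟩
  calc f H₁₂₃ + f H₂ ≤ f (H₁₂ ∪ H₂₃) + f (H₁₂ ∩ H₂₃) :=
        add_le_add (min₁₂₃ _ hu) (min₂ _ hi)
    _ ≤ f H₁₂ + f H₂₃ := hf _ _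
end

section
/- (Nesting of minimizing homology hypersurfaces.) Suppose f is submodular, let R₁ ⊆ R₂ ⊆ B, and let H₁ be a minimizer for R₁ and H₂ a minimizer for R₂. Then H₁ ∩ H₂ is also a minimizer for R₁ and H₁ ∪ H₂ is also a minimizer for R₂; in particular there exist minimizers H₁′ for R₁ and H₂′ for R₂ with H₁′ ⊆ H₂′. (This is the combinatorial core of the paper's entanglement wedge nesting theorem: for nested boundary regions one can always choose the minimal generalized entropy homology hypersurfaces on the common Cauchy slice to be nested.) -/
/-- Nesting of minimizing homology hypersurfaces: for nested boundary regions
R₁ ⊆ R₂ and submodular f, the intersection of minimizers is a minimizer for R₁,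
the union is a minimizer for R₂, and in particular nested minimizers exist. -/
theorem min_nesting {α : Type*} (B : Set α) (f : Set α → ℝ)
    (hf : ∀ H₁ H₂ : Set α, f (H₁ ∪ H₂) + f (H₁ ∩ H₂) ≤ f H₁ + f H₂)
    (R₁ R₂ : Set α) (hR₁₂ : R₁ ⊆ R₂) (hR₂ : R₂ ⊆ B)
    (H₁ H₂ : Set α)
    (hH₁ : IsMinimizer B f R₁ H₁) (hH₂ : IsMinimizer B f R₂ H₂) :
    IsMinimizer B f R₁ (H₁ ∩ H₂) ∧ IsMinimizer B f R₂ (H₁ ∪ H₂) ∧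
    ∃ H₁' H₂' : Set α, IsMinimizer B f R₁ H₁' ∧ IsMinimizer B f R₂ H₂' ∧ H₁' ⊆ H₂' := by
  obtain ⟨hf₁, hm₁⟩ := hH₁
  obtain ⟨hf₂, hm₂⟩ := hH₂
  have hcap : InFiber B R₁ (H₁ ∩ H₂) := by
    have h : (H₁ ∩ H₂) ∩ B = (H₁ ∩ B) ∩ (H₂ ∩ B) := by ext x; simp; tauto
    unfold InFiber
    rw [h, hf₁, hf₂, Set.inter_eq_left.mpr hR₁₂]
  have hcup : InFiber B R₂ (H₁ ∪ H₂) := by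
    unfold InFiber
    rw [Set.union_inter_distrib_right, hf₁, hf₂, Set.union_eq_right.mpr hR₁₂]
  have h1 := hm₁ _ hcap
  have h2 := hm₂ _ hcup
  have hsub := hf H₁ H₂
  have e1 : f (H₁ ∩ H₂) = f H₁ := le_antisymm (by linarith) h1
  have e2 : f (H₁ ∪ H₂) = f H₂ := le_antisymm (by linarith) h2
  have min1 : IsMinimizer B f R₁ (H₁ ∩ H₂) := ⟨hcap, fun H' h => e1 ▸ hm₁ H' h⟩
  have min2 : IsMinimizer B f R₂ (H₁ ∪ H₂) := ⟨hcup, fun H' h => e2 ▸ hm₂ H' h⟩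
  exact ⟨min1, min2, H₁ ∩ H₂, H₁ ∪ H₂, min1, min2,
    (Set.inter_subset_left).trans Set.subset_union_left⟩
end

section
/- (Nesting for the hybrid entropy with a nonholographic subsystem.) Suppose f is submodular, let R₁ ⊆ R₂ ⊆ B and Q₁ ⊆ Q₂ ⊆ N, and let H₁ be a minimizer for (R₁, Q₁) and H₂ a minimizer for (R₂, Q₂). Then H₁ ∩ H₂ is also a minimizer for (R₁, Q₁) and H₁ ∪ H₂ is also a minimizer for (R₂, Q₂); in particular there exist minimizers H₁′ for (R₁, Q₁) and H₂′ for (R₂, Q₂) with H₁′ ⊆ H₂′. (This is the combinatorial core of the paper's theorem that a smaller boundary region together with a smaller nonholographic subsystem never has a larger entanglement wedge; when the boundary region is empty it says smaller nonholographic subsystems never have larger islands.) -/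
/-- `H` is a homology hypersurface for the boundary region `R` together with
the nonholographic subsystem `Q`, where `B` is the boundary of the slice and
`N` the nonholographic system. -/
def InFiber2 {α : Type*} (B N R Q H : Set α) : Prop := H ∩ B = R ∧ H ∩ N = Q

/-- `H` is a minimal hybrid entropy homology hypersurface for `(R, Q)`. -/
def IsMinimizer2 {α : Type*} (B N : Set α) (f : Set α → ℝ) (R Q H : Set α) : Prop :=
  InFiber2 B N R Q H ∧ ∀ H' : Set α, InFiber2 B N R Q H' → f H ≤ f H'

/-- Nesting for the hybrid entropy with a nonholographic subsystem: for
R₁ ⊆ R₂ ⊆ B, Q₁ ⊆ Q₂ ⊆ N and submodular hybrid entropy f, the intersection of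
minimizers is a minimizer for (R₁, Q₁), the union is a minimizer for (R₂, Q₂),
and in particular nested minimizers exist. -/
theorem hybrid_nesting {α : Type*} (B N : Set α) (hBN : Disjoint B N)
    (f : Set α → ℝ)
    (hf : ∀ H₁ H₂ : Set α, f (H₁ ∪ H₂) + f (H₁ ∩ H₂) ≤ f H₁ + f H₂)
    (R₁ R₂ Q₁ Q₂ : Set α)
    (hR₁₂ : R₁ ⊆ R₂) (hR₂ : R₂ ⊆ B) (hQ₁₂ : Q₁ ⊆ Q₂) (hQ₂ : Q₂ ⊆ N)
    (H₁ H₂ : Set α)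
    (hH₁ : IsMinimizer2 B N f R₁ Q₁ H₁) (hH₂ : IsMinimizer2 B N f R₂ Q₂ H₂) :
    IsMinimizer2 B N f R₁ Q₁ (H₁ ∩ H₂) ∧ IsMinimizer2 B N f R₂ Q₂ (H₁ ∪ H₂) ∧
    ∃ H₁' H₂' : Set α, IsMinimizer2 B N f R₁ Q₁ H₁' ∧ IsMinimizer2 B N f R₂ Q₂ H₂' ∧
      H₁' ⊆ H₂' := by
  obtain ⟨⟨h1B, h1N⟩, hmin1⟩ := hH₁
  obtain ⟨⟨h2B, h2N⟩, hmin2⟩ := hH₂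
  have fibInt : InFiber2 B N R₁ Q₁ (H₁ ∩ H₂) := by
    constructor
    · rw [Set.inter_comm H₁, Set.inter_assoc, h1B]
      calc H₂ ∩ R₁ = H₂ ∩ B ∩ R₁ := by
            rw [Set.inter_assoc, Set.inter_eq_right.mpr (hR₁₂.trans hR₂)]
        _ = R₁ := by rw [h2B, Set.inter_eq_right.mpr hR₁₂]
    · rw [Set.inter_comm H₁, Set.inter_assoc, h1N]
      calc H₂ ∩ Q₁ = H₂ ∩ N ∩ Q₁ := by
            rw [Set.inter_assoc, Set.inter_eq_right.mpr (hQ₁₂.trans hQ₂)]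
        _ = Q₁ := by rw [h2N, Set.inter_eq_right.mpr hQ₁₂]
  have fibUn : InFiber2 B N R₂ Q₂ (H₁ ∪ H₂) := by
    constructor
    · rw [Set.union_inter_distrib_right, h1B, h2B, Set.union_eq_right.mpr hR₁₂]
    · rw [Set.union_inter_distrib_right, h1N, h2N, Set.union_eq_right.mpr hQ₁₂]
  have le1 : f H₁ ≤ f (H₁ ∩ H₂) := hmin1 _ fibInt
  have le2 : f H₂ ≤ f (H₁ ∪ H₂) := hmin2 _ fibUn
  have key := hf H₁ H₂
  have eq1 : f (H₁ ∩ H₂) = f H₁ := le_antisymm (by linarith) le1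
  have eq2 : f (H₁ ∪ H₂) = f H₂ := le_antisymm (by linarith) le2
  have m1 : IsMinimizer2 B N f R₁ Q₁ (H₁ ∩ H₂) :=
    ⟨fibInt, fun H' h' => eq1 ▸ hmin1 H' h'⟩
  have m2 : IsMinimizer2 B N f R₂ Q₂ (H₁ ∪ H₂) :=
    ⟨fibUn, fun H' h' => eq2 ▸ hmin2 H' h'⟩
  exact ⟨m1, m2, H₁ ∩ H₂, H₁ ∪ H₂, m1, m2,
    (Set.inter_subset_left).trans Set.subset_union_left⟩
end

section
/- (Strong subadditivity for the hybrid entropy with nonholographic subsystems.) Suppose f is submodular, let R₁, R₂, R₃ ⊆ B be pairwise disjoint and Q₁, Q₂, Q₃ ⊆ N be pairwise disjoint, and suppose minimizers exist for each of (R₁∪R₂, Q₁∪Q₂), (R₂∪R₃, Q₂∪Q₃), (R₁∪R₂∪R₃, Q₁∪Q₂∪Q₃) and (R₂, Q₂). Then S(R₁∪R₂, Q₁∪Q₂) + S(R₂∪R₃, Q₂∪Q₃) ≥ S(R₁∪R₂∪R₃, Q₁∪Q₂∪Q₃) + S(R₂, Q₂). (This is the combinatorial core of the paper's theorem that the quantum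 maximin hybrid entropy of disjoint boundary regions together with disjoint nonholographic subsystems satisfies strong subadditivity.) -/
/-- Strong subadditivity for the hybrid entropy with nonholographic subsystems:
for pairwise disjoint boundary regions R₁, R₂, R₃ and pairwise disjoint
nonholographic subsystems Q₁, Q₂, Q₃, with submodular hybrid entropy f,
S(R₁∪R₂, Q₁∪Q₂) + S(R₂∪R₃, Q₂∪Q₃) ≥ S(R₁∪R₂∪R₃, Q₁∪Q₂∪Q₃) + S(R₂, Q₂). -/
theorem hybrid_ssa {α : Type*} (B N : Set α) (hBN : Disjoint B N)
    (f : Set α → ℝ)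
    (hf : ∀ H₁ H₂ : Set α, f (H₁ ∪ H₂) + f (H₁ ∩ H₂) ≤ f H₁ + f H₂)
    (R₁ R₂ R₃ Q₁ Q₂ Q₃ : Set α)
    (hR₁ : R₁ ⊆ B) (hR₂ : R₂ ⊆ B) (hR₃ : R₃ ⊆ B)
    (hQ₁ : Q₁ ⊆ N) (hQ₂ : Q₂ ⊆ N) (hQ₃ : Q₃ ⊆ N)
    (hR₁₂ : Disjoint R₁ R₂) (hR₁₃ : Disjoint R₁ R₃) (hR₂₃ : Disjoint R₂ R₃)
    (hQ₁₂ : Disjoint Q₁ Q₂) (hQ₁₃ : Disjoint Q₁ Q₃) (hQ₂₃ : Disjoint Q₂ Q₃)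
    (H₁₂ H₂₃ H₁₂₃ H₂ : Set α)
    (hH₁₂ : IsMinimizer2 B N f (R₁ ∪ R₂) (Q₁ ∪ Q₂) H₁₂)
    (hH₂₃ : IsMinimizer2 B N f (R₂ ∪ R₃) (Q₂ ∪ Q₃) H₂₃)
    (hH₁₂₃ : IsMinimizer2 B N f (R₁ ∪ R₂ ∪ R₃) (Q₁ ∪ Q₂ ∪ Q₃) H₁₂₃)
    (hH₂ : IsMinimizer2 B N f R₂ Q₂ H₂) :
    f H₁₂ + f H₂₃ ≥ f H₁₂₃ + f H₂ := by
  obtain ⟨⟨hB12, hN12⟩, hmin12⟩ := hH₁₂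
  obtain ⟨⟨hB23, hN23⟩, hmin23⟩ := hH₂₃
  obtain ⟨_, hmin123⟩ := hH₁₂₃
  obtain ⟨_, hmin2⟩ := hH₂
  have hU : InFiber2 B N (R₁ ∪ R₂ ∪ R₃) (Q₁ ∪ Q₂ ∪ Q₃) (H₁₂ ∪ H₂₃) := by
    constructor
    · rw [Set.union_inter_distrib_right, hB12, hB23]
      ext x; simp; tauto
    · rw [Set.union_inter_distrib_right, hN12, hN23]
      ext x; simp; tauto
  have hI : InFiber2 B N R₂ Q₂ (H₁₂ ∩ H₂₃) := by
    constructor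
    · have : (H₁₂ ∩ H₂₃) ∩ B = (H₁₂ ∩ B) ∩ (H₂₃ ∩ B) := by
        ext x; simp; tauto
      rw [this, hB12, hB23]
      ext x
      simp only [Set.mem_inter_iff, Set.mem_union]
      constructor
      · rintro ⟨h1 | h1, h2 | h2⟩
        · exact absurd (hR₁₂.ne_of_mem h1 h2) (fun h => h rfl)
        · exact absurd (hR₁₃.ne_of_mem h1 h2) (fun h => h rfl)
        · exact h1
        · exact h1
      · intro h; exact ⟨Or.inr h, Or.inl h⟩
    · have : (H₁₂ ∩ H₂₃) ∩ N = (H₁₂ ∩ N) ∩ (H₂₃ ∩ N) := by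
        ext x; simp; tauto
      rw [this, hN12, hN23]
      ext x
      simp only [Set.mem_inter_iff, Set.mem_union]
      constructor
      · rintro ⟨h1 | h1, h2 | h2⟩
        · exact absurd (hQ₁₂.ne_of_mem h1 h2) (fun h => h rfl)
        · exact absurd (hQ₁₃.ne_of_mem h1 h2) (fun h => h rfl)
        · exact h1
        · exact h1
      · intro h; exact ⟨Or.inr h, Or.inl h⟩
  have h1 := hmin123 _ hU
  have h2 := hmin2 _ hI
  have h3 := hf H₁₂ H₂₃
  linarith
end

section
/- (Mean curvature comparison for touching graphs; the classical content of the spacelike comparison lemma, Lemma 2, for hypersurfaces given as graphs over Euclidean space.) Let n be a natural number, E = EuclideanSpace ℝ (Fin n), and let f, g : E → ℝ be twice continuously differentiable with g(x) ≤ f(x) for all x ∈ E and f(p) = g(p) at some point p. Then the mean curvatures of the graphs of f and g at p, computed with respect to the upward normal, satisfy H[f](p) ≥ H[g](p), where for a twice continuously differentiable u : E → ℝ one defines H[u](p) = ((1 + ‖∇u(p)‖²)·Δu(p) − Hess u(p)(∇u(p), ∇u(p))) · (1 + ‖∇u(p)‖²)^(−3/2). -/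
/-!
The difference `h = f - g` attains its minimum `0` at `p`, so `∇f(p) = ∇g(p) =: G` and the
Hessian `B` of `h` at `p` is positive semidefinite. Then `H[f](p) - H[g](p)` is a positive multiple
of `(1 + ‖G‖²) tr B - B(G, G)`, which is at least `tr B ≥ 0` because a positive semidefinite
form satisfies `B(G, G) ≤ ‖G‖² tr B`.
-/

open scoped RealInnerProductSpace

/-- The Hessian of `u` at `p` evaluated on the pair `(v, w)`. -/
noncomputable def hess {n : ℕ} (u : EuclideanSpace ℝ (Fin n) → ℝ)
    (p v w : EuclideanSpace ℝ (Fin n)) : ℝ :=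
  iteratedFDeriv ℝ 2 u p ![v, w]

/-- The Laplacian of `u` at `p`: the sum of the Hessian over the standard
orthonormal basis of Euclidean space. -/
noncomputable def lapl {n : ℕ} (u : EuclideanSpace ℝ (Fin n) → ℝ)
    (p : EuclideanSpace ℝ (Fin n)) : ℝ :=
  ∑ i : Fin n, hess u p (EuclideanSpace.single i 1) (EuclideanSpace.single i 1)

/-- Mean curvature of the graph of `u` at `p` with respect to the upward
normal: H[u](p) = ((1 + ‖∇u‖²)Δu − Hess u(∇u, ∇u)) (1 + ‖∇u‖²)^(−3/2). -/
noncomputable def meanCurv {n : ℕ} (u : EuclideanSpace ℝ (Fin n) → ℝ)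
    (p : EuclideanSpace ℝ (Fin n)) : ℝ :=
  ((1 + ‖gradient u p‖ ^ 2) * lapl u p -
      hess u p (gradient u p) (gradient u p)) *
    (1 + ‖gradient u p‖ ^ 2) ^ (-(3 : ℝ) / 2)

open Filter Topology

/- If `f''(a) < 0`, the second-derivative test makes `a` a local maximum as well, so `f` is
locally constant and `f''(a) = 0`. -/
theorem IsLocalMin.deriv_deriv_nonneg {f : ℝ → ℝ} {a : ℝ} (h : IsLocalMin f a)
    (hc : ContinuousAt f a) : 0 ≤ deriv (deriv f) a := by
  by_contra! hneg
  have hconst : f =ᶠ[𝓝 a] fun _ ↦ f a :=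
    ((isLocalMax_of_deriv_deriv_neg hneg h.deriv_eq_zero hc).and h).mono
      fun _ hx ↦ le_antisymm hx.1 hx.2
  simp [hconst.deriv.deriv_eq] at hneg

theorem IsLocalMin.fderiv_fderiv_apply_self_nonneg {E : Type*} [NormedAddCommGroup E]
    [NormedSpace ℝ E] {f : E → ℝ} {a : E} (h : IsLocalMin f a)
    (hf : ∀ᶠ x in 𝓝 a, DifferentiableAt ℝ f x)
    (hf' : DifferentiableAt ℝ (fderiv ℝ f) a) (v : E) :
    0 ≤ fderiv ℝ (fderiv ℝ f) a v v := by
  have hline : ∀ t : ℝ, HasDerivAt (fun s : ℝ ↦ a + s • v) v t := fun t ↦ by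
    simpa using ((hasDerivAt_id t).smul_const v).const_add a
  have hline0 : Tendsto (fun s : ℝ ↦ a + s • v) (𝓝 0) (𝓝 a) := by
    simpa using (hline 0).continuousAt.tendsto
  have hderiv : deriv (fun t : ℝ ↦ f (a + t • v)) =ᶠ[𝓝 0]
      fun t ↦ fderiv ℝ f (a + t • v) v :=
    (hline0.eventually hf).mono fun t ht ↦ (ht.hasFDerivAt.comp_hasDerivAt t (hline t)).deriv
  have hsecond : HasDerivAt (fun t : ℝ ↦ fderiv ℝ f (a + t • v) v)
      (fderiv ℝ (fderiv ℝ f) a v v) 0 := by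
    have := (hf'.hasFDerivAt.comp_hasDerivAt_of_eq 0 (hline 0) (by simp)).clm_apply
      (hasDerivAt_const 0 v)
    simpa using this
  have hmin : IsLocalMin (fun t : ℝ ↦ f (a + t • v)) 0 :=
    IsLocalMin.comp_continuous (g := fun t : ℝ ↦ a + t • v) (by simpa using h)
      (hline 0).continuousAt
  have hcont : ContinuousAt (fun t : ℝ ↦ f (a + t • v)) 0 :=
    ContinuousAt.comp_of_eq hf.self_of_nhds.continuousAt (hline 0).continuousAt (by simp)
  simpa [hderiv.deriv_eq, hsecond.deriv] using hmin.deriv_deriv_nonneg hcont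

/- Expanding `v` in the basis and applying Cauchy–Schwarz in `ℝ^ι` and then for `B` gives
`B(v, v)² ≤ ‖v‖² · tr B · B(v, v)`. -/
theorem LinearMap.BilinForm.apply_self_le_norm_sq_mul_sum {ι E : Type*} [Fintype ι]
    [NormedAddCommGroup E] [InnerProductSpace ℝ E] (B : LinearMap.BilinForm ℝ E)
    (hs : ∀ x, 0 ≤ B x x) (hB : LinearMap.IsSymm B) (b : OrthonormalBasis ι ℝ E) (v : E) :
    B v v ≤ ‖v‖ ^ 2 * ∑ i, B (b i) (b i) := by
  have hexpand : B v v = ∑ i, ⟪b i, v⟫ * B (b i) v := by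
    nth_rw 1 [← b.sum_repr' v]
    simp [map_sum, map_smul]
  have hsq : B v v ^ 2 ≤ ‖v‖ ^ 2 * ((∑ i, B (b i) (b i)) * B v v) := by
    calc B v v ^ 2 ≤ (∑ i, ⟪b i, v⟫ ^ 2) * ∑ i, B (b i) v ^ 2 := by
          rw [hexpand]; exact Finset.sum_mul_sq_le_sq_mul_sq _ _ _
      _ ≤ ‖v‖ ^ 2 * ((∑ i, B (b i) (b i)) * B v v) := by
          rw [b.sum_sq_inner_right, Finset.sum_mul]
          gcongr with i
          exact B.apply_sq_le_of_symm hs hB _ _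
  have htr : 0 ≤ ∑ i, B (b i) (b i) := Finset.sum_nonneg fun i _ ↦ hs (b i)
  rcases (hs v).eq_or_lt with hzero | hpos
  · rw [← hzero]; positivity
  · nlinarith

section Graph

variable {n : ℕ}

theorem hess_eq_fderiv_fderiv (u : EuclideanSpace ℝ (Fin n) → ℝ)
    (p v w : EuclideanSpace ℝ (Fin n)) :
    hess u p v w = fderiv ℝ (fderiv ℝ u) p v w :=
  iteratedFDeriv_two_apply u p ![v, w]

theorem hess_sub {f g : EuclideanSpace ℝ (Fin n) → ℝ} {p : EuclideanSpace ℝ (Fin n)}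
    (hf : ContDiffAt ℝ 2 f p) (hg : ContDiffAt ℝ 2 g p) (v w : EuclideanSpace ℝ (Fin n)) :
    hess (f - g) p v w = hess f p v w - hess g p v w := by
  rw [hess, iteratedFDeriv_sub_apply hf hg]
  rfl

theorem lapl_sub {f g : EuclideanSpace ℝ (Fin n) → ℝ} {p : EuclideanSpace ℝ (Fin n)}
    (hf : ContDiffAt ℝ 2 f p) (hg : ContDiffAt ℝ 2 g p) :
    lapl (f - g) p = lapl f p - lapl g p := by
  simp only [lapl, hess_sub hf hg, Finset.sum_sub_distrib]

theorem gradient_eq_of_isLocalMin_sub {f g : EuclideanSpace ℝ (Fin n) → ℝ}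
    {p : EuclideanSpace ℝ (Fin n)} (hf : DifferentiableAt ℝ f p) (hg : DifferentiableAt ℝ g p)
    (h : IsLocalMin (f - g) p) : gradient f p = gradient g p := by
  have hzero := h.fderiv_eq_zero
  rw [fderiv_sub hf hg, sub_eq_zero] at hzero
  simp only [gradient, hzero]

theorem hess_self_nonneg_of_isLocalMin {u : EuclideanSpace ℝ (Fin n) → ℝ}
    {p : EuclideanSpace ℝ (Fin n)} (hu : ContDiff ℝ 2 u) (h : IsLocalMin u p)
    (v : EuclideanSpace ℝ (Fin n)) : 0 ≤ hess u p v v := by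
  rw [hess_eq_fderiv_fderiv]
  exact h.fderiv_fderiv_apply_self_nonneg
    (Eventually.of_forall (hu.differentiable two_ne_zero))
    ((hu.fderiv_right one_add_one_eq_two.le).differentiable one_ne_zero p) v

theorem hess_self_le_norm_sq_mul_lapl {u : EuclideanSpace ℝ (Fin n) → ℝ}
    {p : EuclideanSpace ℝ (Fin n)} (hu : ContDiffAt ℝ 2 u p) (hpsd : ∀ v, 0 ≤ hess u p v v)
    (v : EuclideanSpace ℝ (Fin n)) : hess u p v v ≤ ‖v‖ ^ 2 * lapl u p := by
  have hsymm := hu.isSymmSndFDerivAt (by simp [minSmoothness_of_isRCLikeNormedField])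
  simp only [hess_eq_fderiv_fderiv] at hpsd ⊢
  simpa [lapl, hess_eq_fderiv_fderiv] using
    LinearMap.BilinForm.apply_self_le_norm_sq_mul_sum
      (fderiv ℝ (fderiv ℝ u) p).toLinearMap₁₂ hpsd ⟨fun x y ↦ hsymm.eq x y⟩
      (EuclideanSpace.basisFun (Fin n) ℝ) v

end Graph

/-- Mean curvature comparison for touching graphs: if g ≤ f everywhere and the
graphs touch at p, then the mean curvature of the graph of f at p (upward
normal) is at least that of the graph of g. -/
theorem meanCurv_comparison {n : ℕ}
    (f g : EuclideanSpace ℝ (Fin n) → ℝ)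
    (hf : ContDiff ℝ 2 f) (hg : ContDiff ℝ 2 g)
    (hle : ∀ x, g x ≤ f x) (p : EuclideanSpace ℝ (Fin n)) (heq : f p = g p) :
    meanCurv f p ≥ meanCurv g p := by
  have hmin : IsLocalMin (f - g) p :=
    Eventually.of_forall fun x ↦ by simp [heq, hle x]
  have hpsd := hess_self_nonneg_of_isLocalMin (u := f - g) (hf.sub hg) hmin
  set G := gradient g p
  have hgrad : gradient f p = G :=
    gradient_eq_of_isLocalMin_sub (hf.differentiable two_ne_zero p)
      (hg.differentiable two_ne_zero p) hmin
  have htrace := hess_self_le_norm_sq_mul_lapl (u := f - g) (hf.sub hg).contDiffAt hpsd G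
  have hlapl : 0 ≤ lapl (f - g) p := Finset.sum_nonneg fun i _ ↦ hpsd _
  rw [hess_sub hf.contDiffAt hg.contDiffAt] at htrace
  rw [lapl_sub hf.contDiffAt hg.contDiffAt] at htrace hlapl
  rw [ge_iff_le, meanCurv, meanCurv, hgrad]
  gcongr ?_ * _
  linarith
end

section
/- (The bump deformation decreases the truncated four-derivative gravitational entropy of a line; the Appendix claim with L₁ = L₂ = 5, α = 10, λ = 1, ℓ = 1.) Let f : ℝ → ℝ be defined by f(y) = 5·exp(−10/(1 − y²/25)) for |y| < 5 and f(y) = 0 otherwise (a smooth bump function). Then ∫_{−5}^{5} √(1 + f′(y)²) · (1 − f″(y)² / (2·(1 + f′(y)²)³)) dy < 10, i.e. the truncated gravitational entropy functional S = ∫ √h·(1 − K²/2) evaluated on the graph of f over the interval [−5, 5] is strictly smaller than its value 10 on the undeformed straight line. -/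
open intervalIntegral

/-- The bump function deformation of the straight line: f(y) = 5 exp(−10/(1 − y²/25))
for |y| < 5 and f(y) = 0 otherwise. -/
noncomputable def bump (y : ℝ) : ℝ :=
  if |y| < 5 then 5 * Real.exp (-10 / (1 - y ^ 2 / 25)) else 0

/-!
Write `f = bump`, `u = 1 - y²/25` and `E = exp (-10/u)`. Since `f = 5 · expNegInvGlue (u/10)`,
`f` is smooth, and on `(-5, 5)` both `f'` and `f''` are rational functions of `y` times `E`.
The bound `E ≤ 6u³/1000` gives `f'² ≤ 9/625`; then `√(1 + G) ≤ 1 + G/2` and `(1 + G)³ ≤ 21/20`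
for `G = f'²` bound the integrand by `1 - (f''² - (21/20) f'²)/(21/10)`, and it remains to show
`∫ (f''² - (21/20) f'²) > 0`. Adding the exact derivative `(w f²)'` of a polynomial weight `w`,
which integrates to `0` because `f(±5) = 0`, turns the integrand into `E² p(u)/u⁸` for a
polynomial `p` that is positive on `[0, 1]`.
-/

open Real Topology Set

lemma bump_eq_expNegInvGlue : bump = fun y => 5 * expNegInvGlue ((1 - y ^ 2 / 25) / 10) := by
  funext y
  by_cases hy : |y| < 5
  · have hu : 0 < 1 - y ^ 2 / 25 := by
      have := sq_lt_sq' (abs_lt.mp hy).1 (abs_lt.mp hy).2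
      linarith
    rw [bump, if_pos hy, expNegInvGlue, if_neg (not_le.mpr (by positivity)), inv_div, neg_div]
  · have hu : 1 - y ^ 2 / 25 ≤ 0 := by nlinarith [sq_abs y, abs_nonneg y, not_lt.mp hy]
    rw [bump, if_neg hy, expNegInvGlue.zero_of_nonpos (by linarith), mul_zero]

lemma contDiff_bump : ContDiff ℝ 2 bump := by
  rw [bump_eq_expNegInvGlue]
  exact contDiff_const.mul (expNegInvGlue.contDiff.comp (by fun_prop))

@[fun_prop]
lemma continuous_deriv_bump : Continuous (deriv bump) :=
  contDiff_bump.continuous_deriv (by norm_num)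

@[fun_prop]
lemma continuous_deriv_deriv_bump : Continuous (deriv (deriv bump)) :=
  (contDiff_bump.deriv' (n := 1)).continuous_deriv le_rfl

lemma bump_eventuallyEq {y u : ℝ} (hu : u = 1 - y ^ 2 / 25) (hu0 : 0 < u) :
    bump =ᶠ[𝓝 y] fun x => 5 * exp (-10 / (1 - x ^ 2 / 25)) := by
  have hy : |y| < 5 := abs_lt_of_sq_lt_sq (by linarith) (by norm_num)
  filter_upwards [(isOpen_lt continuous_abs continuous_const).mem_nhds hy] with x hx
  exact if_pos hx

lemma hasDerivAt_mul_exp_div {r v : ℝ → ℝ} {r' v' k y : ℝ} (hr : HasDerivAt r r' y)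
    (hv : HasDerivAt v v' y) (hy : v y ≠ 0) :
    HasDerivAt (fun x => r x * exp (k / v x)) ((r' - k * v' / v y ^ 2 * r y) * exp (k / v y)) y := by
  refine (hr.fun_mul ((hasDerivAt_const y k).fun_div hv hy).exp).congr_deriv ?_
  field_simp
  ring

lemma hasDerivAt_one_sub_sq_div (a y : ℝ) :
    HasDerivAt (fun x : ℝ => 1 - x ^ 2 / a) (-(2 * y / a)) y := by
  simpa using ((hasDerivAt_pow 2 y).div_const a).const_sub 1

lemma hasDerivAt_bump {y u : ℝ} (hu : u = 1 - y ^ 2 / 25) (hu0 : 0 < u) :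
    HasDerivAt bump (-4 * y / u ^ 2 * exp (-10 / u)) y := by
  refine ((hasDerivAt_mul_exp_div (hasDerivAt_const y 5) (hasDerivAt_one_sub_sq_div 25 y)
    (hu ▸ hu0.ne')).congr_deriv ?_).congr_of_eventuallyEq (bump_eventuallyEq hu hu0)
  simp only [← hu]
  field_simp
  ring

lemma hasDerivAt_deriv_bump {y u : ℝ} (hu : u = 1 - y ^ 2 / 25) (hu0 : 0 < u) :
    HasDerivAt (deriv bump)
      ((16 * y ^ 2 / 5 - 16 * y ^ 2 / 25 * u - 4 * u ^ 2) / u ^ 4 * exp (-10 / u)) y := by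
  have hopen : IsOpen {x : ℝ | 0 < 1 - x ^ 2 / 25} := isOpen_lt continuous_const (by fun_prop)
  have hderiv : deriv bump =ᶠ[𝓝 y]
      fun x => -4 * x / (1 - x ^ 2 / 25) ^ 2 * exp (-10 / (1 - x ^ 2 / 25)) := by
    filter_upwards [hopen.mem_nhds (show 0 < 1 - y ^ 2 / 25 from hu ▸ hu0)] with x hx
    exact (hasDerivAt_bump rfl hx).deriv
  have hr : HasDerivAt (fun x : ℝ => -4 * x / (1 - x ^ 2 / 25) ^ 2)
      (-4 / u ^ 2 - 16 * y ^ 2 / (25 * u ^ 3)) y := by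
    refine (((hasDerivAt_id' y).const_mul (-4)).fun_div
      ((hasDerivAt_one_sub_sq_div 25 y).fun_pow 2) (hu ▸ pow_ne_zero 2 hu0.ne')).congr_deriv ?_
    simp only [← hu]
    field_simp
    ring
  refine ((hasDerivAt_mul_exp_div hr (hasDerivAt_one_sub_sq_div 25 y)
    (hu ▸ hu0.ne')).congr_deriv ?_).congr_of_eventuallyEq hderiv
  simp only [← hu]
  field_simp
  ring

lemma exp_neg_div_le {a u : ℝ} (ha : 0 < a) (hu : 0 < u) : exp (-a / u) ≤ 6 * u ^ 3 / a ^ 3 := by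
  have h := pow_div_factorial_le_exp (a / u) (div_pos ha hu).le 3
  rw [neg_div, exp_neg, inv_le_comm₀ (exp_pos _) (by positivity)]
  refine le_of_eq_of_le ?_ h
  simp only [Nat.factorial]
  field_simp
  norm_num

lemma one_add_sq_deriv_bump_pow_three_le {y : ℝ} (hy : y ∈ Ioo (-5) 5) :
    (1 + deriv bump y ^ 2) ^ 3 ≤ 21 / 20 := by
  set u := 1 - y ^ 2 / 25 with hu
  have hu0 : 0 < u := by nlinarith [hy.1, hy.2]
  have hu1 : u ≤ 1 := by nlinarith
  have hy2 : y ^ 2 ≤ 25 := by nlinarith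
  have hE := exp_neg_div_le (a := 10) (by norm_num) hu0
  have hg : deriv bump y ^ 2 ≤ 9 / 625 := by
    rw [(hasDerivAt_bump hu hu0).deriv, div_mul_eq_mul_div, div_pow, div_le_iff₀ (by positivity)]
    calc (-4 * y * exp (-10 / u)) ^ 2 = 16 * y ^ 2 * exp (-10 / u) ^ 2 := by ring
      _ ≤ 16 * 25 * (6 * u ^ 3 / 10 ^ 3) ^ 2 := by gcongr
      _ ≤ 9 / 625 * (u ^ 2) ^ 2 := by nlinarith [pow_le_one₀ hu0.le hu1 (n := 2), pow_pos hu0 4]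
  calc (1 + deriv bump y ^ 2) ^ 3 ≤ (1 + 9 / 625) ^ 3 := by gcongr
    _ ≤ 21 / 20 := by norm_num

lemma sqrt_one_add_mul_one_sub_le {G H c : ℝ} (hG : 0 ≤ G) (hH : 0 ≤ H) (hc : (1 + G) ^ 3 ≤ c) :
    √(1 + G) * (1 - H / (2 * (1 + G) ^ 3)) ≤ 1 - (H - c * G) / (2 * c) := by
  have hG3 : 1 ≤ (1 + G) ^ 3 := one_le_pow₀ (by linarith)
  have hs1 : 1 ≤ √(1 + G) := by simpa using Real.sqrt_le_sqrt (show 1 ≤ 1 + G by linarith)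
  have hs : √(1 + G) ≤ 1 + G / 2 := by
    rw [Real.sqrt_le_left (by linarith)]
    nlinarith
  have hHc : H / (2 * c) ≤ H / (2 * (1 + G) ^ 3) := by gcongr
  have hc0 : 0 < c := by linarith
  calc √(1 + G) * (1 - H / (2 * (1 + G) ^ 3))
      = √(1 + G) - √(1 + G) * (H / (2 * (1 + G) ^ 3)) := by ring
    _ ≤ (1 + G / 2) - 1 * (H / (2 * c)) := by gcongr
    _ = 1 - (H - c * G) / (2 * c) := by field_simp; ring

/-- Found by linear programming, so that the certificate polynomial below is positive. -/
noncomputable def bumpWeight (y : ℝ) : ℝ := y ^ 7 / 250 + y ^ 5 / 25 + 18 * y ^ 3 / 125 - 3 * y / 5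

lemma hasDerivAt_bumpWeight (y : ℝ) :
    HasDerivAt bumpWeight (7 * y ^ 6 / 250 + y ^ 4 / 5 + 54 * y ^ 2 / 125 - 3 / 5) y := by
  refine (((((hasDerivAt_pow 7 y).div_const 250).fun_add ((hasDerivAt_pow 5 y).div_const 25)).fun_add
    (((hasDerivAt_pow 3 y).const_mul 18).div_const 125)).fun_sub
    (((hasDerivAt_id' y).const_mul 3).div_const 5)).congr_deriv ?_
  push_cast
  ring

lemma contDiff_bumpWeight_mul_sq_bump : ContDiff ℝ 1 fun x => bumpWeight x * bump x ^ 2 :=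
  (by unfold bumpWeight; fun_prop : ContDiff ℝ 1 bumpWeight).mul
    ((contDiff_bump.of_le (by norm_num)).pow 2)

lemma integral_deriv_bumpWeight_mul_sq_bump :
    ∫ y in (-5 : ℝ)..5, deriv (fun x => bumpWeight x * bump x ^ 2) y = 0 := by
  rw [integral_deriv_eq_sub
    (fun x _ => contDiff_bumpWeight_mul_sq_bump.differentiable one_ne_zero x)
    (contDiff_bumpWeight_mul_sq_bump.continuous_deriv_one.intervalIntegrable _ _)]
  simp [bump]

/-- Its coefficients in the Bernstein basis `u ^ k * (1 - u) ^ (11 - k)` are all positive. -/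
lemma certificate_poly_pos {u : ℝ} (h0 : 0 ≤ u) (h1 : u ≤ 1) :
    0 < 6400 - 15360 * u + 11136 * u ^ 2 - 2304 * u ^ 3 - 276 * u ^ 4 + 420 * u ^ 5
      - 90500 * u ^ 6 + 331600 * u ^ 7 - 878565 / 2 * u ^ 8 + 471335 / 2 * u ^ 9
      - 53125 / 2 * u ^ 10 - 21875 / 2 * u ^ 11 := by
  have h1' : 0 ≤ 1 - u := by linarith
  have b (k l : ℕ) : 0 ≤ u ^ k * (1 - u) ^ l := by positivity
  linarith [b 0 11, b 1 10, b 2 9, b 3 8, b 4 7, b 5 6, b 6 5, b 7 4, b 8 3, b 9 2, b 10 1, b 11 0]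

lemma sq_deriv_deriv_bump_sub_add_deriv_pos {y : ℝ} (hy : y ∈ Ioo (-5) 5) :
    0 < deriv (deriv bump) y ^ 2 - 21 / 20 * deriv bump y ^ 2
      + deriv (fun x => bumpWeight x * bump x ^ 2) y := by
  set u := 1 - y ^ 2 / 25 with hu
  have hu0 : 0 < u := by nlinarith [hy.1, hy.2]
  have hu1 : u ≤ 1 := by nlinarith
  have hbump : bump y = 5 * exp (-10 / u) := (bump_eventuallyEq hu hu0).eq_of_nhds
  rw [(hasDerivAt_deriv_bump hu hu0).deriv,
    ((hasDerivAt_bumpWeight y).fun_mul ((hasDerivAt_bump hu hu0).fun_pow 2)).deriv,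
    (hasDerivAt_bump hu hu0).deriv, hbump]
  refine (mul_pos (by positivity : 0 < exp (-10 / u) ^ 2 / u ^ 8)
    (certificate_poly_pos hu0.le hu1)).trans_eq ?_
  have := hu0.ne'
  simp only [bumpWeight]
  field_simp
  rw [hu]
  ring

lemma integral_sq_deriv_deriv_bump_sub_pos :
    0 < ∫ y in (-5 : ℝ)..5, (deriv (deriv bump) y ^ 2 - 21 / 20 * deriv bump y ^ 2) := by
  have hW : Continuous (deriv fun x => bumpWeight x * bump x ^ 2) :=
    contDiff_bumpWeight_mul_sq_bump.continuous_deriv_one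
  have hdiff : Continuous fun y => deriv (deriv bump) y ^ 2 - 21 / 20 * deriv bump y ^ 2 := by
    fun_prop
  have hpos := intervalIntegral_pos_of_pos_on ((hdiff.add hW).intervalIntegrable _ _)
    (fun y hy => sq_deriv_deriv_bump_sub_add_deriv_pos hy) (by norm_num)
  simp only [Pi.add_apply] at hpos
  rwa [integral_add (hdiff.intervalIntegrable _ _) (hW.intervalIntegrable _ _),
    integral_deriv_bumpWeight_mul_sq_bump, add_zero] at hpos

/-- The bump deformation strictly decreases the truncated four-derivative
gravitational entropy ∫ √(1 + f′²)(1 − f″²/(2(1 + f′²)³)) of the straight line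
over [−5, 5], whose undeformed value is 10. -/
theorem bump_decreases_truncated_entropy :
    (∫ y in (-5 : ℝ)..5,
        Real.sqrt (1 + (deriv bump y) ^ 2) *
          (1 - (deriv (deriv bump) y) ^ 2 /
            (2 * (1 + (deriv bump y) ^ 2) ^ 3))) < 10 := by
  have hdiff : Continuous fun y => deriv (deriv bump) y ^ 2 - 21 / 20 * deriv bump y ^ 2 := by
    fun_prop
  calc _ ≤ ∫ y in (-5 : ℝ)..5,
        (1 - (deriv (deriv bump) y ^ 2 - 21 / 20 * deriv bump y ^ 2) / (2 * (21 / 20))) :=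
        integral_mono_on_of_le_Ioo (by norm_num)
          (Continuous.intervalIntegrable (by fun_prop (disch := intro; positivity)) _ _)
          (Continuous.intervalIntegrable (by fun_prop) _ _)
          fun y hy => sqrt_one_add_mul_one_sub_le (sq_nonneg _) (sq_nonneg _)
            (one_add_sq_deriv_bump_pow_three_le hy)
    _ = 10 - (∫ y in (-5 : ℝ)..5,
          (deriv (deriv bump) y ^ 2 - 21 / 20 * deriv bump y ^ 2)) / (21 / 10) := by
        rw [integral_sub intervalIntegrable_const ((hdiff.intervalIntegrable _ _).div_const _),
          integral_div]
        norm_num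
    _ < 10 := by
        have := div_pos integral_sq_deriv_deriv_bump_sub_pos (by norm_num : (0 : ℝ) < 21 / 10)
        linarith
end
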